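/- With p^j_k = 1/d + (2/d)(d+1)^{−1/2} ∑_{r=1}^{(d−1)/2} cos(α^j_r + 2πkr/d), for every fixed j and every s = 1,…,d−1 one has ∑_{k=0}^{d−1} p^j_k p^j_{k+s} = 1/(d+1), where indices are taken mod d. -/

import Mathlib

open BigOperators Finset

/-- `p^j_k = 1/d + (2/d)(d+1)^{-1/2} ∑_{r=1}^{(d-1)/2} cos(α^j_r + 2πkr/d)` -/
noncomputable def pfun (d : ℕ) (α : ℕ → ℕ → ℝ) (j k : ℕ) : ℝ :=
  1 / d + (2 / d) * (1 / Real.sqrt (d + 1)) *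
    ∑ r ∈ Finset.Icc 1 ((d - 1) / 2), Real.cos (α j r + 2 * Real.pi * k * r / d)

lemma cos_mul_cos' (x y : ℝ) :
    Real.cos x * Real.cos y = (Real.cos (x - y) + Real.cos (x + y)) / 2 := by
  rw [Real.cos_sub, Real.cos_add]; ring

lemma sum_cos_zero (d : ℕ) (hd : 0 < d) (n : ℤ) (hn : ¬ (d:ℤ) ∣ n) (θ : ℝ) :
    ∑ k ∈ Finset.range d, Real.cos (θ + 2 * Real.pi * k * n / d) = 0 := by
  have hdR : (d:ℝ) ≠ 0 := Nat.cast_ne_zero.mpr hd.ne'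
  have hdC : (d:ℂ) ≠ 0 := Nat.cast_ne_zero.mpr hd.ne'
  set a : ℝ := 2 * Real.pi * n / d with ha
  have hz1 : Complex.exp ((a:ℂ) * Complex.I) ≠ 1 := by
    intro h
    rw [Complex.exp_eq_one_iff] at h
    obtain ⟨m, hm⟩ := h
    have h2 : (a:ℂ) * Complex.I = ((m:ℂ) * (2 * Real.pi)) * Complex.I := by
      rw [hm]; ring
    have : (a : ℂ) = (m:ℂ) * (2 * Real.pi) := mul_right_cancel₀ Complex.I_ne_zero h2
    have hr : a = (m:ℝ) * (2 * Real.pi) := by exact_mod_cast this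
    rw [ha] at hr
    apply hn
    refine ⟨m, ?_⟩
    have hπ := Real.pi_ne_zero
    field_simp at hr
    have : (n:ℝ) = (d:ℝ) * m := by
      apply mul_left_cancel₀ (show (2*Real.pi) ≠ 0 by positivity)
      linear_combination (2*Real.pi) * hr
    exact_mod_cast this
  have hzd : Complex.exp ((a:ℂ) * Complex.I) ^ d = 1 := by
    rw [← Complex.exp_nat_mul]
    have : (d:ℂ) * ((a:ℂ) * Complex.I) = (n:ℤ) * (2 * Real.pi * Complex.I) := by
      rw [ha]; push_cast; field_simp
    rw [this]
    exact Complex.exp_int_mul_two_pi_mul_I n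
  have key : ∑ k ∈ Finset.range d,
      (Complex.exp ((θ:ℂ) * Complex.I) * Complex.exp ((a:ℂ) * Complex.I) ^ k) = 0 := by
    rw [← Finset.mul_sum, geom_sum_eq hz1, hzd, sub_self, zero_div, mul_zero]
  have : ∑ k ∈ Finset.range d, Real.cos (θ + 2 * Real.pi * k * n / d)
      = (∑ k ∈ Finset.range d,
          (Complex.exp ((θ:ℂ) * Complex.I) * Complex.exp ((a:ℂ) * Complex.I) ^ k)).re := by
    rw [Complex.re_sum]
    refine Finset.sum_congr rfl fun k _ => ?_
    rw [← Complex.exp_ofReal_mul_I_re]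
    congr 1
    rw [← Complex.exp_nat_mul, ← Complex.exp_add]
    congr 1
    push_cast [ha]
    field_simp
  rw [this, key, Complex.zero_re]

lemma cos_reflect (d s a : ℕ) (ha : a ≤ d) :
    Real.cos (2 * Real.pi * s * ((d - a : ℕ):ℝ) / d) = Real.cos (2 * Real.pi * s * a / d) := by
  rcases Nat.eq_zero_or_pos d with h | h
  · subst h; simp
  have hdR : (d:ℝ) ≠ 0 := Nat.cast_ne_zero.mpr h.ne'
  have hcast : ((d - a : ℕ):ℝ) = (d:ℝ) - a := by
    push_cast [ha]; ring
  rw [hcast]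
  have : 2 * Real.pi * s * ((d:ℝ) - a) / d = -(2 * Real.pi * s * a / d) + (s:ℕ) * (2 * Real.pi) := by
    field_simp; ring
  rw [this, Real.cos_add_nat_mul_two_pi, Real.cos_neg]

lemma sum_cos_half (d : ℕ) (hd : 1 < d) (hodd : Odd d) (s : ℕ) (hs1 : 1 ≤ s) (hs2 : s ≤ d - 1) :
    ∑ r ∈ Finset.Icc 1 ((d-1)/2), Real.cos (2*Real.pi*s*r/d) = -(1/2) := by
  obtain ⟨m', hm'⟩ := hodd
  set m := (d-1)/2 with hm
  have hmd : d = 2*m + 1 := by omega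
  have hds : ¬ (d:ℤ) ∣ (s:ℤ) := by
    rw [Int.natCast_dvd_natCast]
    intro h
    have := Nat.le_of_dvd (by omega) h
    omega
  have hfull : ∑ r ∈ Finset.range d, Real.cos (2*Real.pi*s*r/d) = 0 := by
    have := sum_cos_zero d (by omega) (s:ℤ) hds 0
    rw [← this]
    refine Finset.sum_congr rfl fun r _ => ?_
    congr 1
    push_cast
    ring
  have hsplit0 : ∑ r ∈ Finset.range d, Real.cos (2*Real.pi*s*r/d)
      = 1 + ∑ r ∈ Finset.Ico 1 d, Real.cos (2*Real.pi*s*r/d) := by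
    rw [Finset.range_eq_Ico, Finset.sum_eq_sum_Ico_succ_bot (by omega : 0 < d)]
    norm_num
  have htail : ∑ r ∈ Finset.Ico 1 d, Real.cos (2*Real.pi*s*r/d) = -1 := by
    have := hsplit0 ▸ hfull; linarith
  have hsplit : ∑ r ∈ Finset.Ico 1 d, Real.cos (2*Real.pi*s*r/d)
      = ∑ r ∈ Finset.Ico 1 (m+1), Real.cos (2*Real.pi*s*r/d)
        + ∑ r ∈ Finset.Ico (m+1) d, Real.cos (2*Real.pi*s*r/d) := by
    rw [Finset.sum_Ico_consecutive _ (by omega) (by omega)]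
  have hrefl : ∑ r ∈ Finset.Ico (m+1) d, Real.cos (2*Real.pi*s*r/d)
      = ∑ r ∈ Finset.Ico 1 (m+1), Real.cos (2*Real.pi*s*r/d) := by
    refine Finset.sum_nbij' (fun r => d - r) (fun r => d - r) ?_ ?_ ?_ ?_ ?_
    · intro a ha; simp only [Finset.mem_Ico] at *; omega
    · intro a ha; simp only [Finset.mem_Ico] at *; omega
    · intro a ha; simp only [Finset.mem_Ico] at *; omega
    · intro a ha; simp only [Finset.mem_Ico] at *; omega
    · intro a ha
      simp only [Finset.mem_Ico] at ha
      exact (cos_reflect d s a (by omega)).symm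
  have hIcc : Finset.Icc 1 m = Finset.Ico 1 (m+1) := by
    rw [Finset.Ico_add_one_right_eq_Icc]
  rw [hIcc]
  linarith [hsplit, htail, hrefl]

lemma innerSumCos (d s : ℕ) (m : ℕ) (hmd : d = 2*m+1) (x y : ℝ) (r r' : ℕ)
    (hr1 : 1 ≤ r) (hr2 : r ≤ m) (hr1' : 1 ≤ r') (hr2' : r' ≤ m) :
    ∑ k ∈ Finset.range d,
      Real.cos (x + 2*Real.pi*k*r/d) * Real.cos (y + 2*Real.pi*(k+s)*r'/d)
      = if r = r' then ((d:ℝ)/2) * Real.cos (x - y - 2*Real.pi*s*r/d) else 0 := by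
  have hd0 : 0 < d := by omega
  set n₁ : ℤ := (r:ℤ) - r' with hn₁
  set n₂ : ℤ := (r:ℤ) + r' with hn₂
  have step : ∀ k : ℕ,
      Real.cos (x + 2*Real.pi*k*r/d) * Real.cos (y + 2*Real.pi*(k+s)*r'/d)
      = (Real.cos ((x - y - 2*Real.pi*s*r'/d) + 2*Real.pi*k*(n₁:ℝ)/d)
        + Real.cos ((x + y + 2*Real.pi*s*r'/d) + 2*Real.pi*k*(n₂:ℝ)/d))/2 := by
    intro k
    rw [cos_mul_cos']
    congr 2
    · push_cast [hn₁]; ring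
    · push_cast [hn₂]; ring
  rw [Finset.sum_congr rfl fun k _ => step k]
  rw [← Finset.sum_div, Finset.sum_add_distrib]
  have hB : ∑ k ∈ Finset.range d,
      Real.cos ((x + y + 2*Real.pi*s*r'/d) + 2*Real.pi*k*(n₂:ℝ)/d) = 0 := by
    apply sum_cos_zero d hd0 n₂
    have h : n₂ = ((r + r' : ℕ) : ℤ) := by push_cast [hn₂]; ring
    rw [h, Int.natCast_dvd_natCast]
    intro hdvd
    have := Nat.le_of_dvd (by omega) hdvd
    omega
  by_cases h : r = r'
  · subst h
    have hz : n₁ = 0 := by simp [hn₁]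
    have hconst : ∀ k : ℕ,
        Real.cos ((x - y - 2*Real.pi*s*r/d) + 2*Real.pi*k*(n₁:ℝ)/d)
        = Real.cos (x - y - 2*Real.pi*s*r/d) := by
      intro k; rw [hz]; norm_num
    rw [Finset.sum_congr rfl fun k _ => hconst k, Finset.sum_const, Finset.card_range,
      nsmul_eq_mul, hB]
    rw [if_pos rfl]
    ring
  · have hA : ∑ k ∈ Finset.range d,
        Real.cos ((x - y - 2*Real.pi*s*r'/d) + 2*Real.pi*k*(n₁:ℝ)/d) = 0 := by
      apply sum_cos_zero d hd0 n₁
      intro hdvd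
      have habs : |n₁| < (d:ℤ) := by
        rw [abs_lt]; constructor <;> [skip; skip] <;> push_cast [hn₁] <;> omega
      have := Int.eq_zero_of_abs_lt_dvd hdvd habs
      rw [hn₁] at this
      apply h
      omega
    rw [hA, hB, if_neg h]
    norm_num

/-- for each fixed `j` and each `s = 1,…,d-1`,
`∑_k p^j_k p^j_{k+s} = 1/(d+1)` with indices mod `d`. -/
theorem pfun_shifted_correlation (d : ℕ) (hp : Nat.Prime d) (hodd : Odd d)
    (α : ℕ → ℕ → ℝ) (j : ℕ) (hj : j ≤ d) (s : ℕ) (hs1 : 1 ≤ s) (hs2 : s ≤ d - 1) :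
    ∑ k ∈ Finset.range d, pfun d α j k * pfun d α j ((k + s) % d) = 1 / (d + 1) := by
  obtain ⟨t0, ht0⟩ := hodd
  have h2 := hp.two_le
  have hd3 : 3 ≤ d := by omega
  set m := (d-1)/2 with hm
  have hmd : d = 2*m + 1 := by omega
  have hd0 : 0 < d := by omega
  have hdR : (d:ℝ) ≠ 0 := Nat.cast_ne_zero.mpr (by omega)
  have hd1R : (d:ℝ) + 1 ≠ 0 := by positivity
  set c : ℝ := 2/(d:ℝ) * (1/Real.sqrt ((d:ℝ)+1)) with hc
  set A : ℕ → ℝ := fun k => ∑ r ∈ Finset.Icc 1 m, Real.cos (α j r + 2*Real.pi*k*r/d) with hA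
  set B : ℕ → ℝ := fun k =>
    ∑ r ∈ Finset.Icc 1 m, Real.cos (α j r + 2*Real.pi*((k+s : ℕ):ℝ)*r/d) with hB
  have hpf : ∀ k : ℕ, pfun d α j k = 1/d + c * A k := by
    intro k; rfl
  have hmod : ∀ k : ℕ, pfun d α j ((k+s) % d) = 1/d + c * B k := by
    intro k
    rw [hpf ((k+s) % d)]
    congr 1
    rw [hA, hB]
    refine congrArg _ (Finset.sum_congr rfl fun r _ => ?_)
    have hq : ((k+s) % d) + d * ((k+s)/d) = k + s := Nat.mod_add_div _ _
    have hcast : (((k+s : ℕ)):ℝ) = (((k+s) % d : ℕ):ℝ) + (d:ℝ) * (((k+s)/d : ℕ):ℝ) := by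
      exact_mod_cast congrArg (Nat.cast : ℕ → ℝ) hq.symm
    have harg : α j r + 2*Real.pi*(((k+s : ℕ)):ℝ)*r/d
        = (α j r + 2*Real.pi*(((k+s) % d : ℕ):ℝ)*r/d) + (((k+s)/d * r : ℕ):ℝ)*(2*Real.pi) := by
      rw [hcast]; push_cast; field_simp; ring
    rw [harg, Real.cos_add_nat_mul_two_pi]
  have hAzero : ∑ k ∈ Finset.range d, A k = 0 := by
    rw [hA]
    rw [Finset.sum_comm]
    apply Finset.sum_eq_zero
    intro r hr
    simp only [Finset.mem_Icc] at hr
    have hnd : ¬ (d:ℤ) ∣ (r:ℤ) := by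
      rw [Int.natCast_dvd_natCast]
      intro hdvd
      have := Nat.le_of_dvd (by omega) hdvd
      omega
    have := sum_cos_zero d hd0 (r:ℤ) hnd (α j r)
    rw [← this]
    refine Finset.sum_congr rfl fun k _ => congrArg Real.cos ?_
    push_cast
    ring
  have hBzero : ∑ k ∈ Finset.range d, B k = 0 := by
    rw [hB]
    rw [Finset.sum_comm]
    apply Finset.sum_eq_zero
    intro r hr
    simp only [Finset.mem_Icc] at hr
    have hnd : ¬ (d:ℤ) ∣ (r:ℤ) := by
      rw [Int.natCast_dvd_natCast]
      intro hdvd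
      have := Nat.le_of_dvd (by omega) hdvd
      omega
    have := sum_cos_zero d hd0 (r:ℤ) hnd (α j r + 2*Real.pi*s*r/d)
    rw [← this]
    refine Finset.sum_congr rfl fun k _ => congrArg Real.cos ?_
    push_cast
    ring
  have hABval : ∑ k ∈ Finset.range d, A k * B k
      = ((d:ℝ)/2) * ∑ r ∈ Finset.Icc 1 m, Real.cos (2*Real.pi*s*r/d) := by
    have h1 : ∀ k : ℕ, A k * B k = ∑ r ∈ Finset.Icc 1 m, ∑ r' ∈ Finset.Icc 1 m,
        Real.cos (α j r + 2*Real.pi*k*r/d) * Real.cos (α j r' + 2*Real.pi*((k+s:ℕ):ℝ)*r'/d) := by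
      intro k
      rw [hA, hB, Finset.sum_mul_sum]
    rw [Finset.sum_congr rfl fun k _ => h1 k, Finset.sum_comm]
    rw [Finset.mul_sum]
    refine Finset.sum_congr rfl fun r hr => ?_
    simp only [Finset.mem_Icc] at hr
    rw [Finset.sum_comm]
    have h2' : ∀ r' ∈ Finset.Icc 1 m, ∑ k ∈ Finset.range d,
        Real.cos (α j r + 2*Real.pi*k*r/d) * Real.cos (α j r' + 2*Real.pi*((k+s:ℕ):ℝ)*r'/d)
        = if r = r' then ((d:ℝ)/2) * Real.cos (α j r - α j r' - 2*Real.pi*s*r/d) else 0 := by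
      intro r' hr'
      simp only [Finset.mem_Icc] at hr'
      have := innerSumCos d s m hmd (α j r) (α j r') r r' hr.1 hr.2 hr'.1 hr'.2
      rw [← this]
      refine Finset.sum_congr rfl fun k _ => ?_
      congr 2
      push_cast
      ring
    rw [Finset.sum_congr rfl h2', Finset.sum_ite_eq]
    rw [if_pos (Finset.mem_Icc.mpr hr)]
    have : α j r - α j r - 2*Real.pi*s*r/d = -(2*Real.pi*s*r/d) := by ring
    rw [this, Real.cos_neg]
  have hhalf : ∑ r ∈ Finset.Icc 1 m, Real.cos (2*Real.pi*s*r/d) = -(1/2) :=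
    sum_cos_half d (by omega) ⟨m, by omega⟩ s hs1 hs2
  have hexp : ∑ k ∈ Finset.range d, pfun d α j k * pfun d α j ((k + s) % d)
      = ∑ k ∈ Finset.range d,
        (1/(d:ℝ)^2 + (c/d) * A k + (c/d) * B k + c^2 * (A k * B k)) := by
    refine Finset.sum_congr rfl fun k _ => ?_
    rw [hpf k, hmod k]
    ring
  rw [hexp]
  rw [Finset.sum_add_distrib, Finset.sum_add_distrib, Finset.sum_add_distrib,
    ← Finset.mul_sum, ← Finset.mul_sum, ← Finset.mul_sum, hAzero, hBzero, hABval, hhalf,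
    Finset.sum_const, Finset.card_range, nsmul_eq_mul]
  have hsqrt : Real.sqrt ((d:ℝ)+1) ^ 2 = (d:ℝ) + 1 := Real.sq_sqrt (by positivity)
  have hsne : Real.sqrt ((d:ℝ)+1) ≠ 0 := by
    intro h0
    rw [h0] at hsqrt
    simp at hsqrt
    nlinarith [hsqrt]
  have hc2 : c^2 = 4/((d:ℝ)^2*((d:ℝ)+1)) := by
    rw [hc]
    rw [mul_pow, div_pow, div_pow, one_pow, hsqrt]
    field_simp
    ring
  rw [hc2]
  have hcast : ((d:ℕ):ℝ) + 1 = ((d:ℝ) + 1) := by norm_num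
  field_simp
  ring
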